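/- arXiv:1802.01836 — 3 statements merged into one kernel-verified Lean document; each statement's English description precedes it below -/
import Mathlib

section
/- Let z₁, z₂ be nonzero complex numbers with (z₁, z₂) ≠ (1, 1), and let ℂ(z₁, z₂) denote the one-dimensional complex representation of the group ℤ × ℤ (written multiplicatively) in which the element (m, n) acts by multiplication by z₁^m · z₂^n. Then the group cohomology H^n(ℤ × ℤ; ℂ(z₁, z₂)) vanishes for every n ≥ 0. -/
/-!
A central element `g` of `G` acts on every representation by an endomorphism of representations,
naturally in the representation; so it acts on a projective resolution `P` of the trivial module
by a chain map lifting the identity, which is therefore homotopic to the identity. On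
`Hom_G(P, A)` this chain map is multiplication by `r` when `g` acts on `A` by the scalar `r`, so
`r - 1` kills `Hⁿ(G, A)`. In `ℤ × ℤ` one of the two generators acts on `ℂ(z₁, z₂)` by a scalar
different from `1`.
-/

/-- The one-dimensional complex representation `ℂ(z₁, z₂)` of the group `ℤ × ℤ`
(written multiplicatively) in which `(m, n)` acts by multiplication by `z₁^m * z₂^n`. -/
noncomputable def charRepZ2 (z₁ z₂ : ℂ) (h₁ : z₁ ≠ 0) (h₂ : z₂ ≠ 0) :
    Representation ℂ (Multiplicative (ℤ × ℤ)) ℂ where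
  toFun g := (z₁ ^ (Multiplicative.toAdd g).1 * z₂ ^ (Multiplicative.toAdd g).2) • LinearMap.id
  map_one' := by ext; simp
  map_mul' g h := by
    ext
    simp [zpow_add₀ h₁, zpow_add₀ h₂, mul_smul]
    ring

open CategoryTheory Limits

namespace CategoryTheory

variable {C : Type*} [Category C] [HasZeroMorphisms C] {ι : Type*} {c : ComplexShape ι}

@[simps]
def CatCenter.appComplex (z : CatCenter C) (K : HomologicalComplex C c) : K ⟶ K where
  f i := z.app (K.X i)
  comm' _ _ _ := (z.naturality _).symm

lemma CatCenter.appComplex_naturality (z : CatCenter C) {K L : HomologicalComplex C c}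
    (f : K ⟶ L) : f ≫ z.appComplex L = z.appComplex K ≫ f := by
  ext i
  exact z.naturality (f.f i)

lemma CatCenter.appComplex_single [DecidableEq ι] [HasZeroObject C] (z : CatCenter C) (j : ι)
    (X : C) :
    z.appComplex ((HomologicalComplex.single C c j).obj X) =
      (HomologicalComplex.single C c j).map (z.app X) := by
  refine HomologicalComplex.from_single_hom_ext ?_
  rw [HomologicalComplex.single_map_f_self, z.naturality_assoc, Iso.hom_inv_id,
    Category.comp_id, appComplex_f]

end CategoryTheory

namespace HomologicalComplex

variable {R : Type*} [Ring R] {V : Type*} [Category V] [Preadditive V] [Linear R V]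
  {ι : Type*} {c : ComplexShape ι}

lemma isZero_homology_of_homotopy_smul_id {K : HomologicalComplex V c} {r : R}
    (hr : IsUnit (r - 1)) (h : Homotopy (r • 𝟙 K) (𝟙 K)) (i : ι) [K.HasHomology i] :
    IsZero (K.homology i) := by
  obtain ⟨u, hu⟩ := hr
  have hid : (↑u⁻¹ : R) • (r • 𝟙 K - 𝟙 K) = 𝟙 K := by
    rw [smul_sub, smul_smul, ← sub_smul, ← mul_sub_one, ← hu, Units.inv_mul, one_smul]
  have h0 : Homotopy (𝟙 K) 0 :=
    (Homotopy.ofEq hid.symm).trans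
      (((Homotopy.equivSubZero h).smul (↑u⁻¹ : R)).trans (Homotopy.ofEq (smul_zero _)))
  rw [IsZero.iff_id_eq_zero, ← homologyMap_id, h0.homologyMap_eq, homologyMap_zero]

end HomologicalComplex

namespace CategoryTheory.ProjectiveResolution

variable {R : Type*} [CommRing R] {C : Type*} [Category C] [Abelian C] [Linear R C] {X Y : C}

noncomputable def appComplexHomotopyId (P : ProjectiveResolution X) (z : CatCenter C)
    (hX : z.app X = 𝟙 X) : Homotopy (z.appComplex P.complex) (𝟙 P.complex) :=
  liftHomotopy (𝟙 X) _ _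
    (by rw [← CatCenter.appComplex_naturality, CatCenter.appComplex_single, hX]) (by simp)

theorem isZero_homology_linearYonedaObj_of_catCenter (P : ProjectiveResolution X)
    (z : CatCenter C) (hX : z.app X = 𝟙 X) {r : R} (hY : z.app Y = r • 𝟙 Y)
    (hr : IsUnit (r - 1)) (n : ℕ) :
    IsZero ((P.complex.linearYonedaObj R Y).homology n) := by
  have hact (i : ℕ) (f : P.complex.X i ⟶ Y) : z.app _ ≫ f = r • f := by
    rw [← z.naturality, hY, Linear.comp_smul, Category.comp_id]
  refine HomologicalComplex.isZero_homology_of_homotopy_smul_id hr ?_ n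
  have hP := (((linearYoneda R C).obj Y).rightOp.mapHomotopy (P.appComplexHomotopyId z hX)).unop
  refine (Homotopy.ofEq ?_).trans
    (hP.trans (Homotopy.ofEq (by simp only [Functor.map_id, op_id]; rfl)))
  ext i f
  exact (hact i f).symm

end CategoryTheory.ProjectiveResolution

namespace Rep

variable {k G : Type*} [CommRing k] [Monoid G]

def centralMul (g : G) (hg : g ∈ Submonoid.center G) : CatCenter (Rep k G) where
  app A := ofHom (Representation.IntertwiningMap.centralMul A.ρ g hg)
  naturality _ _ f := by
    ext x
    exact (hom_comm_apply f g x).symm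

lemma centralMul_app_trivial (g : G) (hg : g ∈ Submonoid.center G) (V : Type*)
    [AddCommGroup V] [Module k V] : (centralMul g hg).app (trivial k G V) = 𝟙 _ := by
  ext v
  exact trivial_ρ_apply g v

lemma centralMul_app_eq_smul (g : G) (hg : g ∈ Submonoid.center G) (A : Rep k G) {r : k}
    (hA : ∀ a : A, A.ρ g a = r • a) : (centralMul g hg).app A = r • 𝟙 A := by
  ext a
  exact hA a

end Rep

universe u

theorem isZero_groupCohomology_of_central_smul {k G : Type u} [CommRing k] [Group G]
    (A : Rep k G) (g : G) (hg : g ∈ Submonoid.center G) {r : k} (hA : ∀ a : A, A.ρ g a = r • a)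
    (hr : IsUnit (r - 1)) (n : ℕ) : IsZero (groupCohomology A n) := by
  refine (ProjectiveResolution.isZero_homology_linearYonedaObj_of_catCenter
    (Rep.barResolution k G) (Rep.centralMul g hg) ?_ ?_ hr n).of_iso (groupCohomologyIso A n _)
  · exact Rep.centralMul_app_trivial g hg k
  · exact Rep.centralMul_app_eq_smul g hg A hA

/-- Corollary 2.3 (cohomological content): if `(z₁, z₂) ≠ (1, 1)`, then the group
cohomology `H^n(ℤ × ℤ; ℂ(z₁, z₂))` vanishes for every `n`. -/
theorem groupCohomology_int2_char_vanishes (z₁ z₂ : ℂ) (h₁ : z₁ ≠ 0) (h₂ : z₂ ≠ 0)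
    (hne : (z₁, z₂) ≠ (1, 1)) (n : ℕ) :
    Subsingleton (groupCohomology (Rep.of (charRepZ2 z₁ z₂ h₁ h₂)) n) := by
  obtain ⟨g, r, hg, hr⟩ : ∃ (g : Multiplicative (ℤ × ℤ)) (r : ℂ),
      (∀ x, charRepZ2 z₁ z₂ h₁ h₂ g x = r • x) ∧ r ≠ 1 := by
    rcases not_and_or.1 (Prod.ext_iff.not.1 hne) with hz | hz
    · exact ⟨.ofAdd (1, 0), z₁, fun x => by simp [charRepZ2], hz⟩
    · exact ⟨.ofAdd (0, 1), z₂, fun x => by simp [charRepZ2], hz⟩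
  exact ModuleCat.subsingleton_of_isZero <| isZero_groupCohomology_of_central_smul _ g
    (Submonoid.mem_center_iff.2 fun _ => mul_comm _ _) hg (sub_ne_zero.2 hr).isUnit n
end

section
/- Let φ : ℂ² × ℂ² → ℂ be the standard skew-Hermitian symplectic form, φ(v, w) = −v₁·conj(w₂) + v₂·conj(w₁). Let a₀, a₁, a₂ ∈ ℂ² be isotropic vectors (φ(aᵢ, aᵢ) = 0) with a₁, a₂ linearly independent, and write a₀ = β₁·a₁ + β₂·a₂ with β₁, β₂ ∈ ℂ. Then the number f := −conj(β₁)·φ(a₀, a₁) is real, and f · |φ(a₁, a₂)|² = φ(a₀, a₁)·φ(a₁, a₂)·φ(a₂, a₀). In particular, the triple product φ(a₀, a₁)·φ(a₁, a₂)·φ(a₂, a₀) is real and has the same sign as f. -/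
/-!
Write `x = φ(a₁, a₂)`. The identity `|φ(v, w)|² = |det(v, w)|² - φ(v, v) φ(w, w)` shows `x ≠ 0`.
Expanding `a₀ = β₁a₁ + β₂a₂` by sesquilinearity and `φ(w, v) = -conj φ(v, w)` gives
`φ(a₀, a₁) = -β₂ x̄` and `φ(a₂, a₀) = -β̄₁ x̄`, so `f = β̄₁β₂x̄` and the triple product is `f |x|²`;
isotropy of `a₀` reads `β₁β̄₂x = β̄₁β₂x̄`, i.e. `f` is real.
-/

noncomputable def stdForm (v w : Fin 2 → ℂ) : ℂ :=
  -(v 0 * (starRingEnd ℂ) (w 1)) + v 1 * (starRingEnd ℂ) (w 0)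

open ComplexConjugate

lemma Real.sign_mul_of_pos {r k : ℝ} (hk : 0 < k) : Real.sign (r * k) = Real.sign r := by
  rcases lt_trichotomy r 0 with hr | rfl | hr
  · rw [Real.sign_of_neg hr, Real.sign_of_neg (mul_neg_of_neg_of_pos hr hk)]
  · rw [zero_mul]
  · rw [Real.sign_of_pos hr, Real.sign_of_pos (mul_pos hr hk)]

namespace stdForm

variable (u v w : Fin 2 → ℂ) (b c : ℂ)

lemma smul_add_smul_left : stdForm (b • v + c • w) u = b * stdForm v u + c * stdForm w u := by
  simp only [stdForm, Pi.add_apply, Pi.smul_apply, smul_eq_mul]; ring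

lemma smul_add_smul_right :
    stdForm u (b • v + c • w) = conj b * stdForm u v + conj c * stdForm u w := by
  simp only [stdForm, Pi.add_apply, Pi.smul_apply, smul_eq_mul, map_add, map_mul]; ring

lemma swap : stdForm w v = -conj (stdForm v w) := by
  simp only [stdForm, map_add, map_neg, map_mul, Complex.conj_conj]; ring

lemma mul_conj_eq_det_mul_conj_sub :
    stdForm v w * conj (stdForm v w) =
      (Matrix.of ![v, w]).det * conj (Matrix.of ![v, w]).det - stdForm v v * stdForm w w := by
  simp only [stdForm, Matrix.det_fin_two, Matrix.of_apply, Matrix.cons_val_zero,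
    Matrix.cons_val_one, map_add, map_sub, map_neg, map_mul, Complex.conj_conj]
  ring

variable {v w}

lemma ne_zero_of_linearIndependent (hv : stdForm v v = 0) (hli : LinearIndependent ℂ ![v, w]) :
    stdForm v w ≠ 0 := by
  have hdet : (Matrix.of ![v, w]).det ≠ 0 :=
    (Matrix.isUnit_iff_isUnit_det _).mp (Matrix.linearIndependent_rows_iff_isUnit.mp hli)
      |>.ne_zero
  intro h
  have := mul_conj_eq_det_mul_conj_sub v w
  rw [h, hv, zero_mul, zero_mul, sub_zero, eq_comm, Complex.mul_conj,
    Complex.ofReal_eq_zero, Complex.normSq_eq_zero] at this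
  exact hdet this

variable {a₁ a₂ : Fin 2 → ℂ} (β₁ β₂ : ℂ)

lemma combination_left (h₁ : stdForm a₁ a₁ = 0) :
    stdForm (β₁ • a₁ + β₂ • a₂) a₁ = -β₂ * conj (stdForm a₁ a₂) := by
  rw [smul_add_smul_left, h₁, swap a₁ a₂]; ring

lemma combination_right (h₂ : stdForm a₂ a₂ = 0) :
    stdForm a₂ (β₁ • a₁ + β₂ • a₂) = -conj β₁ * conj (stdForm a₁ a₂) := by
  rw [smul_add_smul_right, h₂, swap a₁ a₂]; ring

lemma combination_self (h₁ : stdForm a₁ a₁ = 0) (h₂ : stdForm a₂ a₂ = 0) :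
    stdForm (β₁ • a₁ + β₂ • a₂) (β₁ • a₁ + β₂ • a₂) =
      β₁ * conj β₂ * stdForm a₁ a₂ - conj β₁ * β₂ * conj (stdForm a₁ a₂) := by
  rw [smul_add_smul_left, smul_add_smul_right, smul_add_smul_right, h₁, h₂, swap a₁ a₂]; ring

end stdForm

/-- Lemma 2.11 (concrete form): for isotropic `a₀, a₁, a₂ ∈ ℂ²` with `a₁, a₂`
linearly independent and `a₀ = β₁a₁ + β₂a₂`, the number `f = -conj(β₁)·φ(a₀,a₁)`
is real, `f·|φ(a₁,a₂)|² = φ(a₀,a₁)·φ(a₁,a₂)·φ(a₂,a₀)`, and in particular the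
triple product is real and has the same sign as `f`. -/
theorem wall_form_eq_triple_product (a₀ a₁ a₂ : Fin 2 → ℂ)
    (h₀ : stdForm a₀ a₀ = 0) (h₁ : stdForm a₁ a₁ = 0) (h₂ : stdForm a₂ a₂ = 0)
    (hli : LinearIndependent ℂ ![a₁, a₂]) (β₁ β₂ : ℂ)
    (hβ : a₀ = β₁ • a₁ + β₂ • a₂) :
    ∃ r s : ℝ,
      -(starRingEnd ℂ) β₁ * stdForm a₀ a₁ = (r : ℂ) ∧
      stdForm a₀ a₁ * stdForm a₁ a₂ * stdForm a₂ a₀ = (s : ℂ) ∧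
      (-(starRingEnd ℂ) β₁ * stdForm a₀ a₁) * ((‖stdForm a₁ a₂‖ : ℂ)) ^ 2
        = stdForm a₀ a₁ * stdForm a₁ a₂ * stdForm a₂ a₀ ∧
      Real.sign s = Real.sign r := by
  set x := stdForm a₁ a₂
  have hx : x ≠ 0 := stdForm.ne_zero_of_linearIndependent h₁ hli
  have h01 : stdForm a₀ a₁ = -β₂ * conj x := hβ ▸ stdForm.combination_left β₁ β₂ h₁
  have h20 : stdForm a₂ a₀ = -conj β₁ * conj x := hβ ▸ stdForm.combination_right β₁ β₂ h₂
  have h00 : β₁ * conj β₂ * x = conj β₁ * β₂ * conj x := by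
    rwa [hβ, stdForm.combination_self β₁ β₂ h₁ h₂, sub_eq_zero] at h₀
  obtain ⟨r, hr⟩ : ∃ r : ℝ, -conj β₁ * stdForm a₀ a₁ = r := by
    refine Complex.conj_eq_iff_real.mp ?_
    rw [h01]
    simp only [map_mul, map_neg, Complex.conj_conj]
    linear_combination h00
  have hf : -conj β₁ * stdForm a₀ a₁ * (‖x‖ : ℂ) ^ 2 = stdForm a₀ a₁ * x * stdForm a₂ a₀ := by
    rw [← Complex.mul_conj', h01, h20]; ring
  refine ⟨r, r * ‖x‖ ^ 2, hr, ?_, hf, Real.sign_mul_of_pos (pow_pos (norm_pos_iff.mpr hx) 2)⟩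
  rw [← hf, hr]; push_cast; ring
end

section
/- Let φ : ℂ² × ℂ² → ℂ be the standard skew-Hermitian symplectic form, φ(v, w) = −v₁·conj(w₂) + v₂·conj(w₁). For any three isotropic vectors a, b, c ∈ ℂ² (φ(a,a) = φ(b,b) = φ(c,c) = 0), the triple product φ(a, b)·φ(b, c)·φ(c, a) is a real number; moreover it changes sign under transposition of two arguments: φ(b, a)·φ(a, c)·φ(c, b) = −φ(a, b)·φ(b, c)·φ(c, a). -/
/-- Lemma 2.11 (realness and skew-symmetry): for isotropic vectors `a, b, c ∈ ℂ²`,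
the triple product `φ(a,b)·φ(b,c)·φ(c,a)` is real, and it changes sign under
transposition of two arguments. -/
theorem triple_product_real_and_skew (a b c : Fin 2 → ℂ)
    (ha : stdForm a a = 0) (hb : stdForm b b = 0) (hc : stdForm c c = 0) :
    (∃ r : ℝ, stdForm a b * stdForm b c * stdForm c a = (r : ℂ)) ∧
    stdForm b a * stdForm a c * stdForm c b
      = -(stdForm a b * stdForm b c * stdForm c a) := by
  have key : (starRingEnd ℂ) (stdForm a b * stdForm b c * stdForm c a)
      = stdForm a b * stdForm b c * stdForm c a := by
    simp only [stdForm, map_add, map_mul, map_neg, Complex.conj_conj] at *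
    linear_combination
      ((-2 : ℂ) * b 1 * (starRingEnd ℂ) (b 0) * c 1 * (starRingEnd ℂ) (c 0)
        + b 1 * (starRingEnd ℂ) (b 1) * c 0 * (starRingEnd ℂ) (c 0)
        + b 0 * (starRingEnd ℂ) (b 0) * c 1 * (starRingEnd ℂ) (c 1)) * ha +
      (a 0 * (starRingEnd ℂ) (a 0) * c 1 * (starRingEnd ℂ) (c 1)
        + a 1 * (starRingEnd ℂ) (a 1) * c 0 * (starRingEnd ℂ) (c 0)
        - 2 * a 0 * (starRingEnd ℂ) (a 1) * c 1 * (starRingEnd ℂ) (c 0)) * hb +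
      (a 1 * (starRingEnd ℂ) (a 1) * b 0 * (starRingEnd ℂ) (b 0)
        + a 0 * (starRingEnd ℂ) (a 0) * b 1 * (starRingEnd ℂ) (b 1)
        - 2 * a 0 * (starRingEnd ℂ) (a 1) * b 0 * (starRingEnd ℂ) (b 1)) * hc
  constructor
  · exact ⟨(stdForm a b * stdForm b c * stdForm c a).re,
      (Complex.conj_eq_iff_re.mp key).symm⟩
  · have hswap : ∀ v w : Fin 2 → ℂ, stdForm w v = -((starRingEnd ℂ) (stdForm v w)) := by
      intro v w
      simp only [stdForm, map_add, map_mul, map_neg, Complex.conj_conj]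
      ring
    rw [hswap a b, hswap c a, hswap b c, ← key]
    simp only [map_mul]
    ring
end
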